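/- For every prime p > 3, the sum over k from 0 to p-1 of binom(6k,3k)*binom(3k,k) / 432^k is congruent to (-1)^((p-1)/2) modulo p^2. -/

import Mathlib

/-!
Put `a = -1/6 ∈ ℤ/p²`. Since `binom(6k,3k) binom(3k,k) = 12^k ∏_{j<k} (6j+1)(6j+5) / k!²`
and `(6j+1)(6j+5) / 36 = -(a-j)(a+j+1)`, the `k`-th term is `(-1)^k binom(a,k) binom(a+k,k)`,
so the sum is `L(a)` for the polynomial `L(x) = ∑_{k<p} (-1)^k binom(x,k) binom(x+k,k)` over
`ℤ/p²`. On `0 ≤ n < p`, `L(n) = P_n(-1) = (-1)^n` (Chu–Vandermonde), and `L(-1-x) = L(x)`.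
As `p² = 0`, `L` is affine along `x + pℤ`, and for `0 ≤ b < p`, `L(b - p) = L(p-1-b) = L(b)`
makes it constant there, so `L(a) = (-1)^(a mod p)`. Finally `6 (a mod p) + 1 ∈ {p, 5p}`,
which gives `a mod p ≡ (p-1)/2 (mod 2)`.
-/

open Finset Polynomial
open scoped Nat

theorem sum_neg_one_pow_mul_choose_mul_add_choose (n : ℕ) :
    ∑ k ∈ range (n + 1), (-1 : ℤ) ^ k * n.choose k * (n + k).choose k = (-1) ^ n := by
  have hneg (r : ℤ) (k : ℕ) : Ring.choose (-r) k = (-1) ^ k * Ring.choose (r + k - 1) k := by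
    simp [Ring.choose_neg, Units.smul_def, Int.negOnePow_def]
  have hvdm := Ring.add_choose_eq (r := -(n + 1 : ℤ)) (s := n) n (Commute.all _ _)
  rw [show -(n + 1 : ℤ) + n = -1 by ring, Nat.sum_antidiagonal_eq_sum_range_succ_mk, hneg,
    show (1 : ℤ) + n - 1 = n by ring, Ring.choose_natCast, Nat.choose_self, Nat.cast_one,
    mul_one] at hvdm
  rw [hvdm]
  refine sum_congr rfl fun k hk => ?_
  rw [hneg, Ring.choose_natCast, show (n + 1 : ℤ) + k - 1 = (n + k : ℕ) by push_cast; ring,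
    Ring.choose_natCast, Nat.choose_symm (Nat.le_of_lt_succ (mem_range.mp hk))]
  ring

theorem factorial_six_mul_mul_factorial (k : ℕ) :
    (6 * k)! * k ! =
      (3 * k)! * (2 * k)! * 12 ^ k * ∏ j ∈ range k, (6 * j + 1) * (6 * j + 5) := by
  induction k with
  | zero => simp
  | succ k ih =>
    simp only [Nat.mul_succ, Nat.factorial, Nat.succ_eq_add_one, prod_range_succ, pow_succ]
    linear_combination
      (6 * k + 6) * (6 * k + 5) * (6 * k + 4) * (6 * k + 3) * (6 * k + 2) * (6 * k + 1) *
        (k + 1) * ih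

theorem choose_six_mul_mul_choose_mul_factorial_sq (k : ℕ) :
    (6 * k).choose (3 * k) * (3 * k).choose k * k ! ^ 2 =
      12 ^ k * ∏ j ∈ range k, (6 * j + 1) * (6 * j + 5) := by
  have h6 := Nat.choose_mul_factorial_mul_factorial (show 3 * k ≤ 6 * k by omega)
  have h3 := Nat.choose_mul_factorial_mul_factorial (show k ≤ 3 * k by omega)
  rw [show 6 * k - 3 * k = 3 * k by omega] at h6
  rw [show 3 * k - k = 2 * k by omega] at h3
  apply Nat.eq_of_mul_eq_mul_right (show 0 < (3 * k)! * (2 * k)! by positivity)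
  linear_combination ((6 * k).choose (3 * k) * k ! * (3 * k)!) * h3 + k ! * h6 +
    factorial_six_mul_mul_factorial k

theorem choose_mul_choose_mul_pow_eq_prod {R : Type*} [CommRing R] {a u w : R}
    (ha : 6 * a = -1) (hu : 432 * u = 1) {k : ℕ} (hw : (k ! : R) * w = 1) :
    ((6 * k).choose (3 * k) * (3 * k).choose k : R) * u ^ k =
      (-1) ^ k * w ^ 2 * ∏ j ∈ range k, (a - j) * (a + j + 1) := by
  have hnat := congrArg (Nat.cast : ℕ → R) (choose_six_mul_mul_choose_mul_factorial_sq k)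
  push_cast at hnat
  have hfactor (j : ℕ) : 12 * u * ((6 * j + 1) * (6 * j + 5)) = -1 * ((a - j) * (a + j + 1)) := by
    linear_combination 12 * u * (6 * a + 5) * ha - (a - j) * (a + j + 1) * hu
  have hprod : ((6 * k).choose (3 * k) * (3 * k).choose k : R) * u ^ k * (k ! : R) ^ 2 =
      (-1) ^ k * ∏ j ∈ range k, (a - j) * (a + j + 1) :=
    calc ((6 * k).choose (3 * k) * (3 * k).choose k : R) * u ^ k * (k ! : R) ^ 2
        = (12 * u) ^ k * ∏ j ∈ range k, ((6 * j + 1) * (6 * j + 5) : R) := by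
          rw [mul_pow]
          linear_combination u ^ k * hnat
      _ = ∏ j ∈ range k, -1 * ((a - j) * (a + j + 1)) := by
          rw [← prod_congr rfl fun j _ => hfactor j, prod_mul_distrib (f := fun _ => 12 * u),
            prod_const, card_range]
      _ = (-1) ^ k * ∏ j ∈ range k, (a - j) * (a + j + 1) := by
          rw [prod_mul_distrib, prod_const, card_range]
  linear_combination w ^ 2 * hprod -
    ((6 * k).choose (3 * k) * (3 * k).choose k * u ^ k) * (k ! * w + 1) * hw

theorem Polynomial.eval_add_mul_of_sq_eq_zero {R : Type*} [CommRing R] (P : R[X]) (y ε m : R)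
    (hε : ε ^ 2 = 0) : P.eval (y + m * ε) = P.eval y + m * (P.eval (y + ε) - P.eval y) := by
  have hmε : (m * ε) ^ 2 = 0 := by rw [mul_pow, hε, mul_zero]
  rw [eval_add_of_sq_eq_zero P y _ hmε, eval_add_of_sq_eq_zero P y ε hε]
  ring

theorem ZMod.isUnit_natCast_of_not_dvd {p m : ℕ} (hp : p.Prime) (h : ¬p ∣ m) (e : ℕ) :
    IsUnit (m : ZMod (p ^ e)) :=
  (ZMod.isUnit_iff_coprime _ _).2 (((hp.coprime_iff_not_dvd).2 h).symm.pow_right e)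

theorem ZMod.isUnit_factorial_of_lt {p k : ℕ} (hp : p.Prime) (hk : k < p) (e : ℕ) :
    IsUnit (k ! : ZMod (p ^ e)) :=
  ZMod.isUnit_natCast_of_not_dvd hp (by rw [hp.dvd_factorial]; omega) e

theorem Nat.Prime.not_dvd_two_pow_mul_three_pow {p : ℕ} (hp : p.Prime) (hp3 : 3 < p) (i j : ℕ) :
    ¬p ∣ 2 ^ i * 3 ^ j := by
  rw [hp.dvd_mul, not_or]
  exact ⟨fun h => by linarith [Nat.le_of_dvd two_pos (hp.dvd_of_dvd_pow h)],
    fun h => by linarith [Nat.le_of_dvd three_pos (hp.dvd_of_dvd_pow h)]⟩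

theorem neg_one_pow_mod_eq_of_dvd_six_mul_add_one {R : Type*} [Monoid R] [HasDistribNeg R]
    {p b : ℕ} (hp : 0 < p) (h : p ∣ 6 * b + 1) : (-1 : R) ^ (b % p) = (-1) ^ ((p - 1) / 2) := by
  obtain ⟨c, hc⟩ : p ∣ 6 * (b % p) + 1 := by
    simpa [Nat.dvd_iff_mod_eq_zero, Nat.add_mod, Nat.mul_mod] using h
  -- `6 (b % p) + 1 = p c` with `c < 7`; parity and divisibility by `3` leave `c = 1` or `c = 5`
  have hc7 : c < 7 := by nlinarith [Nat.mod_lt b hp]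
  refine neg_one_pow_congr ?_
  rw [Nat.even_iff, Nat.even_iff]
  interval_cases c <;> omega

/-- `∑_{k<N} (-1)^k binom(X, k) binom(X + k, k)`, with `1 / k!` read as `(k! : ZMod n)⁻¹`
(junk unless `k!` is a unit). -/
noncomputable def truncLegendre (n N : ℕ) : (ZMod n)[X] :=
  ∑ k ∈ range N, C ((-1) ^ k * ((k ! : ZMod n)⁻¹) ^ 2) *
    ∏ j ∈ range k, (X - (j : (ZMod n)[X])) * (X + (j : (ZMod n)[X]) + 1)

theorem eval_truncLegendre (n N : ℕ) (x : ZMod n) :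
    (truncLegendre n N).eval x =
      ∑ k ∈ range N,
        (-1) ^ k * ((k ! : ZMod n)⁻¹) ^ 2 * ∏ j ∈ range k, (x - j) * (x + j + 1) := by
  simp [truncLegendre, eval_finsetSum, eval_prod]

theorem truncLegendre_eval_neg_one_sub (n N : ℕ) (x : ZMod n) :
    (truncLegendre n N).eval (-1 - x) = (truncLegendre n N).eval x := by
  simp only [eval_truncLegendre]
  refine sum_congr rfl fun k _ => congrArg _ (prod_congr rfl fun j _ => ?_)
  ring

theorem truncLegendre_eval_natCast_of_lt {n N m : ℕ} (hN : ∀ k < N, IsUnit (k ! : ZMod n))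
    (hm : m < N) : (truncLegendre n N).eval (m : ZMod n) = (-1) ^ m := by
  have hterm : ∀ k ∈ range N, (-1) ^ k * ((k ! : ZMod n)⁻¹) ^ 2 *
      ∏ j ∈ range k, ((m : ZMod n) - j) * (m + j + 1) =
      (((-1) ^ k * m.choose k * (m + k).choose k : ℤ) : ZMod n) := by
    intro k hk
    have hinv := ZMod.mul_inv_of_unit _ (hN k (mem_range.mp hk))
    have hdesc : ∏ j ∈ range k, ((m : ZMod n) - j) = (k ! * m.choose k : ℕ) := by
      rw [← descPochhammer_eval_eq_prod_range, descPochhammer_eval_eq_descFactorial,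
        Nat.descFactorial_eq_factorial_mul_choose]
    have hasc : ∏ j ∈ range k, ((m : ZMod n) + j + 1) = (k ! * (m + k).choose k : ℕ) := by
      rw [← Nat.ascFactorial_eq_factorial_mul_choose, Nat.ascFactorial_eq_prod_range]
      push_cast
      exact prod_congr rfl fun j _ => by ring
    rw [prod_mul_distrib, hdesc, hasc]
    push_cast
    linear_combination
      (-1) ^ k * m.choose k * (m + k).choose k * (k ! * (k ! : ZMod n)⁻¹ + 1) * hinv
  rw [eval_truncLegendre, sum_congr rfl hterm, ← Int.cast_sum,
    ← sum_subset (range_subset_range.2 hm) fun k _ hk => ?_,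
    sum_neg_one_pow_mul_choose_mul_add_choose]
  · simp
  · rw [Nat.choose_eq_zero_of_lt (by simpa using hk)]
    simp

theorem truncLegendre_eval_natCast {p : ℕ} (hp : p.Prime) (hodd : Odd p) (m : ℕ) :
    (truncLegendre (p ^ 2) p).eval (m : ZMod (p ^ 2)) = (-1) ^ (m % p) := by
  obtain ⟨b, q, hb, rfl⟩ : ∃ b q, b < p ∧ m = b + q * p :=
    ⟨m % p, m / p, Nat.mod_lt _ hp.pos, (Nat.mod_add_div' m p).symm⟩
  rw [Nat.add_mul_mod_self_right, Nat.mod_eq_of_lt hb]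
  push_cast
  set P := truncLegendre (p ^ 2) p
  have hunit : ∀ k < p, IsUnit (k ! : ZMod (p ^ 2)) := fun k hk =>
    ZMod.isUnit_factorial_of_lt hp hk 2
  have hsq : (p : ZMod (p ^ 2)) ^ 2 = 0 := by exact_mod_cast ZMod.natCast_self (p ^ 2)
  have hPb : P.eval (b : ZMod (p ^ 2)) = (-1) ^ b := truncLegendre_eval_natCast_of_lt hunit hb
  have hreflect : P.eval ((b : ZMod (p ^ 2)) + (-1) * p) = P.eval (b : ZMod (p ^ 2)) := by
    have hcast : (b : ZMod (p ^ 2)) + (-1) * p = -1 - ((p - 1 - b : ℕ) : ZMod (p ^ 2)) := by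
      rw [Nat.cast_sub (by omega), Nat.cast_sub hp.one_le]
      ring
    rw [hcast, truncLegendre_eval_neg_one_sub, truncLegendre_eval_natCast_of_lt hunit (by omega),
      hPb]
    obtain ⟨t, rfl⟩ := hodd
    exact neg_one_pow_congr (by rw [Nat.even_iff, Nat.even_iff]; omega)
  have hperiod : P.eval ((b : ZMod (p ^ 2)) + p) = P.eval (b : ZMod (p ^ 2)) := by
    have := eval_add_mul_of_sq_eq_zero P (b : ZMod (p ^ 2)) p (-1) hsq
    rw [hreflect] at this
    linear_combination this
  rw [eval_add_mul_of_sq_eq_zero _ _ _ _ hsq, hperiod, sub_self, mul_zero, add_zero, hPb]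

theorem rodriguez_villegas_432 (p : ℕ) (hp : p.Prime) (hp3 : 3 < p) :
    (∑ k ∈ Finset.range p,
      ((Nat.choose (6 * k) (3 * k) : ZMod (p ^ 2)) * (Nat.choose (3 * k) k : ZMod (p ^ 2)) *
        ((432 : ZMod (p ^ 2))⁻¹) ^ k))
      = (-1) ^ ((p - 1) / 2) := by
  have : NeZero p := ⟨hp.ne_zero⟩
  have hu : (432 : ZMod (p ^ 2)) * 432⁻¹ = 1 := ZMod.mul_inv_of_unit _ <| by
    exact_mod_cast ZMod.isUnit_natCast_of_not_dvd hp (hp.not_dvd_two_pow_mul_three_pow hp3 4 3) 2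
  set a : ZMod (p ^ 2) := -72 * 432⁻¹
  have ha : 6 * a = -1 := by linear_combination -hu
  have hsum : ∑ k ∈ range p, ((6 * k).choose (3 * k) : ZMod (p ^ 2)) * (3 * k).choose k *
      (432 : ZMod (p ^ 2))⁻¹ ^ k = (truncLegendre (p ^ 2) p).eval a := by
    rw [eval_truncLegendre]
    exact sum_congr rfl fun k hk => choose_mul_choose_mul_pow_eq_prod ha hu
      (ZMod.mul_inv_of_unit _ (ZMod.isUnit_factorial_of_lt hp (mem_range.mp hk) 2))
  have hdvd : p ∣ 6 * a.val + 1 := by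
    refine (dvd_pow_self p two_ne_zero).trans ((ZMod.natCast_eq_zero_iff _ (p ^ 2)).1 ?_)
    push_cast
    rw [ZMod.natCast_zmod_val]
    linear_combination ha
  rw [hsum, ← ZMod.natCast_zmod_val a,
    truncLegendre_eval_natCast hp (hp.odd_of_ne_two (by omega))]
  exact neg_one_pow_mod_eq_of_dvd_six_mul_add_one hp.pos hdvd
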